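/- arXiv:2410.19505 — 2 statements merged into one kernel-verified Lean document; each statement's English description precedes it below -/
import Mathlib

section
/- Assume p = 2. Then the mutation graph of well-configured C-data has exactly 2n + l − 1 vertices, is connected, and every vertex has exactly two neighbours; that is, it is a cycle (an extended Dynkin diagram of type Ã) on 2n + l − 1 vertices. -/
open scoped Classical

/-- The numerical setup under which the truncated linear Nakayama algebra `Λ(n,l)`
admits a `d`-cluster tilting subcategory, together with the integers `s i`
(defined by `2 * s i = …`). -/
structure NakSetup where
  n : ℤ
  l : ℤ
  d : ℤ
  p : ℤ
  s : ℤ → ℤ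
  hl : 2 ≤ l
  hd : 2 ≤ d
  hp : 1 ≤ p
  hn : 2 * n = (p - 1) * ((d - 1) * l + 2) + l
  hcase : l = 2 ∨ (2 < l ∧ Even d ∧ Even p)
  hs_odd : ∀ i, 1 ≤ i → i ≤ p → Odd i → 2 * s i = (i - 1) * (d - 1) * l + 2 * i
  hs_even : ∀ i, 1 ≤ i → i ≤ p → Even i → 2 * s i = (i - 1) * ((d - 1) * l + 2) + l

/-- A `C`-datum: subsets `X i ⊆ [1, l-1]` for `2 ≤ i ≤ p` (empty outside this range)
together with disjoint subsets `R, B ⊆ [1, n]`. -/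
structure CDatum (S : NakSetup) where
  X : ℤ → Finset ℤ
  R : Finset ℤ
  B : Finset ℤ
  hX : ∀ i, X i ⊆ Finset.Icc 1 (S.l - 1)
  hXout : ∀ i, ¬(2 ≤ i ∧ i ≤ S.p) → X i = ∅
  hR : R ⊆ Finset.Icc 1 S.n
  hB : B ⊆ Finset.Icc 1 S.n
  hRB : Disjoint R B

namespace CDatum

variable {S : NakSetup}

/-- `m i = |X i|` (as an integer). -/
noncomputable def m (D : CDatum S) (i : ℤ) : ℤ := (D.X i).card

/-- `l_i`: the minimum of `X i`, or `l` if `X i = ∅`. -/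
noncomputable def lo (D : CDatum S) (i : ℤ) : ℤ :=
  if h : (D.X i).Nonempty then (D.X i).min' h else S.l

/-- `n_i`: the maximum of `X i`, or `0` if `X i = ∅`. -/
noncomputable def hi (D : CDatum S) (i : ℤ) : ℤ :=
  if h : (D.X i).Nonempty then (D.X i).max' h else 0

/-- The interval `𝖡_i`. -/
noncomputable def BI (D : CDatum S) (i : ℤ) : Finset ℤ :=
  if Odd i then Finset.Icc (S.s i) (S.s i + D.hi i - 1)
  else Finset.Icc (S.s i - D.hi i + 1) (S.s i)

/-- The interval `𝖱_i`. -/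
noncomputable def RI (D : CDatum S) (i : ℤ) : Finset ℤ :=
  if Odd i then Finset.Icc (S.s (i - 1) - (S.l - D.lo i) + 1) (S.s (i - 1))
  else Finset.Icc (S.s (i - 1)) (S.s (i - 1) + (S.l - D.lo i) - 1)

/-- A `C`-datum is rigid (the combinatorial form of being a `τ_d`-rigid pair). -/
def Rigid (D : CDatum S) : Prop :=
  (∀ x ∈ D.B, ∀ y ∈ D.R, x < y →
      ∃ z, x < z ∧ z + S.l - 2 < y ∧ Finset.Icc z (z + S.l - 2) ∩ (D.R ∪ D.B) = ∅) ∧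
  (∀ i, 2 ≤ i → i ≤ S.p → Odd i →
      D.hi (i - 1) + D.hi i ≤ S.l - 1 ∧ S.l + 1 ≤ D.lo i + D.lo (i + 1) ∧
      (S.d = 2 → D.hi i ≤ D.lo (i + 2) + 1 ∧ D.hi (i - 2) ≤ D.lo i + 1)) ∧
  (∀ i, 2 ≤ i → i ≤ S.p → Even i →
      D.hi i + D.hi (i + 1) ≤ S.l - 1 ∧ S.l + 1 ≤ D.lo (i - 1) + D.lo i) ∧
  (∀ i, 2 ≤ i → i ≤ S.p → D.R ∩ D.RI i = ∅ ∧ D.B ∩ D.BI i = ∅)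

/-- The left endpoint of `Ξ(i, i+k)` (the left endpoint of `𝖱_i`). -/
noncomputable def xiLo (D : CDatum S) (i : ℤ) : ℤ :=
  if Odd i then S.s (i - 1) - (S.l - D.lo i) + 1 else S.s (i - 1)

/-- The right endpoint of `Ξ(i, i+k)`, depending on `j = i + k`
(the right endpoint of `𝖡_{i+k}`). -/
noncomputable def xiHi (D : CDatum S) (j : ℤ) : ℤ :=
  if Even j then S.s j else S.s j + D.hi j - 1

/-- The interval `Ξ(i, i+k)`. -/
noncomputable def Xi (D : CDatum S) (i k : ℤ) : Finset ℤ :=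
  Finset.Icc (D.xiLo i) (D.xiHi (i + k))

/-- The union `𝖡_2 ∪ … ∪ 𝖡_p`. -/
noncomputable def BigB (D : CDatum S) : Finset ℤ :=
  (Finset.Icc 2 S.p).biUnion fun i => D.BI i

/-- The union `𝖱_2 ∪ … ∪ 𝖱_p`. -/
noncomputable def BigR (D : CDatum S) : Finset ℤ :=
  (Finset.Icc 2 S.p).biUnion fun i => D.RI i

/-- The interval `I` is support. -/
def IsSupport (D : CDatum S) (I : Finset ℤ) : Prop :=
  D.R ∩ I = ∅ ∧ D.B ∩ I = I \ D.BigB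

/-- The interval `I` is rigid. -/
def IsRigidI (D : CDatum S) (I : Finset ℤ) : Prop :=
  D.B ∩ I = ∅ ∧ D.R ∩ I = I \ D.BigR

/-- The interval `I` is support to rigid at `x ∈ I`. -/
def IsSuppToRigid (D : CDatum S) (I : Finset ℤ) (x : ℤ) : Prop :=
  x ∈ I ∧ D.B ∩ I = {y ∈ I | y ≤ x} ∧ (D.B ∩ I).Nonempty ∧
    D.R ∩ I = {y ∈ I | x + S.l ≤ y} ∧ (D.R ∩ I).Nonempty

/-- The interval `I` is rigid to support at `x ∈ I`. -/
def IsRigidToSupp (D : CDatum S) (I : Finset ℤ) (x : ℤ) : Prop :=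
  x ∈ I ∧ D.R ∩ I = {y ∈ I | y ≤ x} ∧ (D.R ∩ I).Nonempty ∧
    D.B ∩ I = {y ∈ I | x + 1 ≤ y} ∧ (D.B ∩ I).Nonempty

/-- `(X_i, …, X_{i+k})` is an admissible configuration (types (I)–(VIII)). -/
def Admissible (D : CDatum S) (i k : ℤ) : Prop :=
  2 ≤ i ∧ i + k ≤ S.p ∧ 0 ≤ k ∧
  (∀ j, 0 ≤ j → j ≤ k → (D.X (i + j)).Nonempty) ∧
  ((k = 0 ∧ D.lo i = 1 ∧ D.hi i < S.l - 1 ∧ D.IsSupport (D.Xi i k)) ∨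
   (k = 0 ∧ 1 < D.lo i ∧ D.hi i = S.l - 1 ∧ D.IsRigidI (D.Xi i k)) ∨
   (k = 0 ∧ D.lo i = 1 ∧ D.hi i = S.l - 1 ∧
     (D.IsSupport (D.Xi i k) ∨ D.IsRigidI (D.Xi i k) ∨
       ∃ x ∈ D.Xi i k \ D.BI i, D.IsSuppToRigid (D.Xi i k) x)) ∨
   (k = 1 ∧ Odd i ∧ D.hi i = S.l - 1 ∧ D.hi (i + 1) = S.l - 1 ∧
     D.m i + D.m (i + 1) < S.l - 1 ∧ D.IsRigidI (D.Xi i k)) ∨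
   (k = 1 ∧ Even i ∧ D.lo i = 1 ∧ D.lo (i + 1) = 1 ∧
     D.m i + D.m (i + 1) < S.l - 1 ∧ D.IsSupport (D.Xi i k)) ∨
   (k = 1 ∧ Odd i ∧ D.hi i = S.l - 1 ∧ D.hi (i + 1) = S.l - 1 ∧
     D.m i + D.m (i + 1) = S.l - 1 ∧
     (D.IsRigidI (D.Xi i k) ∨
       ∃ x ∈ Finset.Icc (S.s i - (S.l - D.m (i + 1))) (S.s i - 1),
         D.IsSuppToRigid (D.Xi i k) x)) ∨
   (k = 1 ∧ Even i ∧ D.lo i = 1 ∧ D.lo (i + 1) = 1 ∧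
     D.m i + D.m (i + 1) = S.l - 1 ∧
     (D.IsSupport (D.Xi i k) ∨
       ∃ x ∈ Finset.Icc (S.s i - (S.l - 1)) (S.s i - D.m i),
         D.IsSuppToRigid (D.Xi i k) x)) ∨
   (k = 2 ∧ S.d = 2 ∧ Even i ∧ D.lo i = 1 ∧ D.lo (i + 1) = S.l - D.lo (i + 2) + 1 ∧
     D.hi (i + 1) = S.l - D.hi i - 1 ∧ D.hi (i + 2) = S.l - 1 ∧
     ∃ x ∈ Finset.Icc (S.s (i + 1) - D.lo (i + 2)) (S.s i - D.hi i),
       D.IsSuppToRigid (D.Xi i k) x))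

/-- The configuration on `[i, i+k]` is full: `m_{i+j} = n_{i+j} - l_{i+j} + 1`. -/
def Full (D : CDatum S) (i k : ℤ) : Prop :=
  ∀ j, 0 ≤ j → j ≤ k → D.m (i + j) = D.hi (i + j) - D.lo (i + j) + 1

/-- `[a, b]` is a maximal run of indices with `X` nonempty
(an interval of the diagonal partition). -/
def IsBlock (D : CDatum S) (a b : ℤ) : Prop :=
  2 ≤ a ∧ b ≤ S.p ∧ a ≤ b ∧ (∀ j, a ≤ j → j ≤ b → (D.X j).Nonempty) ∧
    D.X (a - 1) = ∅ ∧ D.X (b + 1) = ∅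

/-- `[a, b]` is the first interval of the diagonal partition. -/
def FirstBlock (D : CDatum S) (a b : ℤ) : Prop :=
  D.IsBlock a b ∧ ∀ j, j < a → D.X j = ∅

/-- `[a, b]` is the last interval of the diagonal partition. -/
def LastBlock (D : CDatum S) (a b : ℤ) : Prop :=
  D.IsBlock a b ∧ ∀ j, b < j → D.X j = ∅

/-- `[a, b]` and `[a', b']` are consecutive intervals of the diagonal partition. -/
def ConsecBlocks (D : CDatum S) (a b a' b' : ℤ) : Prop :=
  D.IsBlock a b ∧ D.IsBlock a' b' ∧ b < a' ∧ ∀ j, b < j → j < a' → D.X j = ∅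

/-- The diagonal component `T = {i ∈ [2, p] : X i ≠ ∅}`. -/
noncomputable def T (D : CDatum S) : Finset ℤ :=
  {i ∈ Finset.Icc 2 S.p | (D.X i).Nonempty}

/-- The configuration on the block `[a, b]` is full admissible of type (III). -/
def FullType3 (D : CDatum S) (a b : ℤ) : Prop :=
  a = b ∧ D.lo a = 1 ∧ D.hi a = S.l - 1 ∧ D.m a = S.l - 1 ∧
    (D.IsSupport (D.Xi a 0) ∨ D.IsRigidI (D.Xi a 0) ∨
      ∃ x ∈ D.Xi a 0 \ D.BI a, D.IsSuppToRigid (D.Xi a 0) x)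

/-- A `Θ`-interval is rigid, support, or rigid to support. -/
def GoodTheta (D : CDatum S) (I : Finset ℤ) : Prop :=
  D.IsRigidI I ∨ D.IsSupport I ∨ ∃ x, D.IsRigidToSupp I x

/-- A `C`-datum is well-configured. -/
def WellConfigured (D : CDatum S) : Prop :=
  (D.T = ∅ ∧ ∃ x, 0 ≤ x ∧ x ≤ S.n ∧ D.R = Finset.Icc 1 x ∧ D.B = Finset.Icc (x + 1) S.n) ∨
  (D.T.Nonempty ∧
    (∀ a b, D.IsBlock a b → D.Admissible a (b - a) ∧ D.Full a (b - a)) ∧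
    (∀ a b a' b', D.ConsecBlocks a b a' b' →
      D.Xi a (b - a) ∩ D.Xi a' (b' - a') = ∅) ∧
    (∀ a b, D.FirstBlock a b → D.GoodTheta (Finset.Icc 1 (D.xiLo a - 1))) ∧
    (∀ a b a' b', D.ConsecBlocks a b a' b' →
      D.GoodTheta (Finset.Icc (D.xiHi b + 1) (D.xiLo a' - 1))) ∧
    (∀ a b, D.LastBlock a b → D.GoodTheta (Finset.Icc (D.xiHi b + 1) S.n)) ∧
    (∀ a b, D.FirstBlock a b → D.IsRigidI (D.Xi a (b - a)) →
      D.IsRigidI (Finset.Icc 1 (D.xiLo a - 1)) ∨ D.FullType3 a b) ∧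
    (∀ a b a' b', D.ConsecBlocks a b a' b' → D.IsRigidI (D.Xi a' (b' - a')) →
      D.IsRigidI (Finset.Icc (D.xiHi b + 1) (D.xiLo a' - 1)) ∨ D.FullType3 a' b') ∧
    (∀ a b a' b', D.ConsecBlocks a b a' b' → D.IsSupport (D.Xi a (b - a)) →
      D.IsSupport (Finset.Icc (D.xiHi b + 1) (D.xiLo a' - 1)) ∨ D.FullType3 a b) ∧
    (∀ a b, D.LastBlock a b → D.IsSupport (D.Xi a (b - a)) →
      D.IsSupport (Finset.Icc (D.xiHi b + 1) S.n) ∨ D.FullType3 a b))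

/-- The summand count `|R| + |B| + Σ_{i=2}^p m_i`. -/
noncomputable def count (D : CDatum S) : ℤ :=
  (D.R.card : ℤ) + (D.B.card : ℤ) + ∑ i ∈ Finset.Icc 2 S.p, D.m i

end CDatum

lemma subset_inter_comm {s t u : Finset ℤ} (h : s ⊆ t ∩ u) : s ⊆ u ∩ t := by
  intro x hx
  have hx' := h hx
  rw [Finset.mem_inter] at hx' ⊢
  exact ⟨hx'.2, hx'.1⟩

/-- The mutation graph of well-configured `C`-data: two distinct well-configured
`C`-data are adjacent when they are mutations of each other, i.e. they share a common
rigid `C`-datum of summand count `n - 1`. -/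
def mutGraph (S : NakSetup) : SimpleGraph {D : CDatum S // D.WellConfigured} where
  Adj D E := D ≠ E ∧ ∃ F : CDatum S, F.Rigid ∧
    (∀ i, F.X i ⊆ D.1.X i ∩ E.1.X i) ∧ F.R ⊆ D.1.R ∩ E.1.R ∧
    F.B ⊆ D.1.B ∩ E.1.B ∧ F.count = S.n - 1
  symm := ⟨by
    rintro D E ⟨hne, F, h1, h2, h3, h4, h5⟩
    exact ⟨hne.symm, F, h1, fun i => subset_inter_comm (h2 i),
      subset_inter_comm h3, subset_inter_comm h4, h5⟩⟩
  loopless := ⟨fun D h => h.1 rfl⟩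

/-!
For `p = 2` only `X 2` can be nonempty and `Ξ(2, 2) = [1, n]`, so a well-configured datum has
one of four explicit normal forms. Laid out on a cycle of `2n + l - 1` positions, these are
exactly the windows of `n` consecutive positions (`CDatum.cycle`). Two distinct windows share at
most `n - 1` summands, with equality exactly for neighbouring windows, and the common part of two
windows is always rigid. Hence mutation shifts a window by one step, and the mutation graph is
isomorphic to `cycleGraph (2n + l - 1)`.
-/

namespace SimpleGraph

theorem cycleGraph_adj_iff_val {N : ℕ} (hN : 3 ≤ N) {u v : Fin N} :
    (cycleGraph N).Adj u v ↔ u.val = v.val + 1 ∨ v.val = u.val + 1 ∨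
      (u.val = 0 ∧ v.val + 1 = N) ∨ (v.val = 0 ∧ u.val + 1 = N) := by
  rw [cycleGraph_adj']
  have hu := u.isLt
  have hv := v.isLt
  rcases lt_trichotomy u v with h | rfl | h
  · rw [Fin.coe_sub_iff_lt.mpr h, Fin.coe_sub_iff_le.mpr h.le]
    rw [Fin.lt_def] at h
    omega
  · rw [Fin.coe_sub_iff_le.mpr le_rfl]
    omega
  · rw [Fin.coe_sub_iff_le.mpr h.le, Fin.coe_sub_iff_lt.mpr h]
    rw [Fin.lt_def] at h
    omega

variable {V : Type*} {G : SimpleGraph V} {N : ℕ}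

theorem Iso.connected_of_cycleGraph (e : cycleGraph N ≃g G) (hN : 1 ≤ N) : G.Connected := by
  obtain ⟨k, rfl⟩ : ∃ k, N = k + 1 := ⟨N - 1, by omega⟩
  exact e.connected_iff.mp cycleGraph_connected

theorem Iso.nat_card_neighborSet_of_cycleGraph (e : cycleGraph N ≃g G) (hN : 3 ≤ N) (v : V) :
    Nat.card (G.neighborSet v) = 2 := by
  obtain ⟨k, rfl⟩ : ∃ k, N = k + 3 := ⟨N - 3, by omega⟩
  rw [← e.apply_symm_apply v, ← Nat.card_congr (e.mapNeighborSet (e.symm v)),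
    Nat.card_eq_fintype_card, card_neighborSet_eq_degree, cycleGraph_degree_three_le]

end SimpleGraph

open Finset

theorem Finset.Icc_inter_Icc_eq {α : Type*} [LinearOrder α] [LocallyFiniteOrder α]
    (a₁ b₁ a₂ b₂ : α) :
    Icc a₁ b₁ ∩ Icc a₂ b₂ = Icc (max a₁ a₂) (min b₁ b₂) := by
  ext x
  simp only [mem_inter, mem_Icc, max_le_iff, le_min_iff]
  tauto

namespace NakSetup

variable {S : NakSetup}

lemma s_one_of_p_eq_two (hp2 : S.p = 2) : S.s 1 = 1 := by
  have h := S.hs_odd 1 le_rfl (by omega) odd_one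
  norm_num at h
  omega

lemma s_two_of_p_eq_two (hp2 : S.p = 2) : S.s 2 = S.n := by
  have h := S.hs_even 2 (by omega) (by omega) even_two
  have : 2 * S.s 2 = 2 * S.n := by rw [h, S.hn, hp2]
  omega

lemma l_lt_n_of_p_eq_two (hp2 : S.p = 2) : S.l < S.n := by
  have hn := S.hn
  rw [hp2] at hn
  nlinarith [S.hd, S.hl]

end NakSetup

namespace CDatum

variable {S : NakSetup}

theorem ext {D E : CDatum S} (hX : D.X = E.X) (hR : D.R = E.R) (hB : D.B = E.B) : D = E := by
  cases D
  cases E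
  cases hX
  cases hR
  cases hB
  rfl

section Bounds

variable (D : CDatum S) (i : ℤ)

lemma lo_eq_of_X_eq_empty (h : D.X i = ∅) : D.lo i = S.l := by
  rw [lo, dif_neg (by simp [h])]

lemma hi_eq_of_X_eq_empty (h : D.X i = ∅) : D.hi i = 0 := by
  rw [hi, dif_neg (by simp [h])]

lemma lo_mem (hne : (D.X i).Nonempty) : D.lo i ∈ D.X i := by
  rw [lo, dif_pos hne]
  exact min'_mem _ _

lemma hi_mem (hne : (D.X i).Nonempty) : D.hi i ∈ D.X i := by
  rw [hi, dif_pos hne]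
  exact max'_mem _ _

lemma one_le_lo : 1 ≤ D.lo i := by
  rcases (D.X i).eq_empty_or_nonempty with h | h
  · linarith [D.lo_eq_of_X_eq_empty i h, S.hl]
  · exact (mem_Icc.mp (D.hX i (D.lo_mem i h))).1

lemma hi_le : D.hi i ≤ S.l - 1 := by
  rcases (D.X i).eq_empty_or_nonempty with h | h
  · linarith [D.hi_eq_of_X_eq_empty i h, S.hl]
  · exact (mem_Icc.mp (D.hX i (D.hi_mem i h))).2

lemma lo_le : D.lo i ≤ S.l := by
  rcases (D.X i).eq_empty_or_nonempty with h | h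
  · rw [D.lo_eq_of_X_eq_empty i h]
  · linarith [(mem_Icc.mp (D.hX i (D.lo_mem i h))).2]

lemma zero_le_hi : 0 ≤ D.hi i := by
  rcases (D.X i).eq_empty_or_nonempty with h | h
  · rw [D.hi_eq_of_X_eq_empty i h]
  · exact (mem_Icc.mp (D.hX i (D.hi_mem i h))).1.trans' zero_le_one

lemma X_subset_Icc_lo_hi : D.X i ⊆ Icc (D.lo i) (D.hi i) := by
  intro x hx
  have hne : (D.X i).Nonempty := ⟨x, hx⟩
  simp only [lo, hi, dif_pos hne]
  exact mem_Icc.mpr ⟨min'_le _ _ hx, le_max' _ _ hx⟩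

variable {D i}

lemma lo_le_hi (hne : (D.X i).Nonempty) : D.lo i ≤ D.hi i :=
  (mem_Icc.mp (D.X_subset_Icc_lo_hi i (D.hi_mem i hne))).1

lemma lo_eq_of_X_eq_Icc {a b : ℤ} (hab : a ≤ b) (h : D.X i = Icc a b) : D.lo i = a := by
  have hne : (D.X i).Nonempty := h ▸ nonempty_Icc.mpr hab
  have h₁ := D.lo_mem i hne
  have h₂ := D.X_subset_Icc_lo_hi i (h ▸ left_mem_Icc.mpr hab)
  rw [h] at h₁
  rw [mem_Icc] at h₁ h₂
  omega

lemma hi_eq_of_X_eq_Icc {a b : ℤ} (hab : a ≤ b) (h : D.X i = Icc a b) : D.hi i = b := by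
  have hne : (D.X i).Nonempty := h ▸ nonempty_Icc.mpr hab
  have h₁ := D.hi_mem i hne
  have h₂ := D.X_subset_Icc_lo_hi i (h ▸ right_mem_Icc.mpr hab)
  rw [h] at h₁
  rw [mem_Icc] at h₁ h₂
  omega

lemma full_zero_iff (hne : (D.X i).Nonempty) : D.Full i 0 ↔ D.X i = Icc (D.lo i) (D.hi i) := by
  have hle := lo_le_hi hne
  have hcard : ((Icc (D.lo i) (D.hi i)).card : ℤ) = D.hi i - D.lo i + 1 := by
    rw [Int.card_Icc]
    omega
  have hfull : D.Full i 0 ↔ D.m i = D.hi i - D.lo i + 1 := by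
    refine ⟨fun h => by simpa using h 0 le_rfl le_rfl, fun h j hj0 hj => ?_⟩
    obtain rfl : j = 0 := by omega
    simpa using h
  rw [hfull, m]
  constructor
  · intro h
    exact eq_of_subset_of_card_le (D.X_subset_Icc_lo_hi i) (by omega)
  · intro h
    rw [h, hcard]

end Bounds

def inf (D E : CDatum S) : CDatum S where
  X i := D.X i ∩ E.X i
  R := D.R ∩ E.R
  B := D.B ∩ E.B
  hX i := inter_subset_left.trans (D.hX i)
  hXout i hi := by rw [D.hXout i hi, empty_inter]
  hR := inter_subset_left.trans D.hR
  hB := inter_subset_left.trans D.hB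
  hRB := D.hRB.mono inter_subset_left inter_subset_left

@[simp] lemma inf_X (D E : CDatum S) (i : ℤ) : (D.inf E).X i = D.X i ∩ E.X i := rfl

@[simp] lemma inf_R (D E : CDatum S) : (D.inf E).R = D.R ∩ E.R := rfl

@[simp] lemma inf_B (D E : CDatum S) : (D.inf E).B = D.B ∩ E.B := rfl

lemma inf_self (D : CDatum S) : D.inf D = D :=
  ext (funext fun _ => inter_self _) (inter_self _) (inter_self _)

lemma count_mono {F D : CDatum S} (hX : ∀ i, F.X i ⊆ D.X i) (hR : F.R ⊆ D.R)
    (hB : F.B ⊆ D.B) : F.count ≤ D.count := by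
  have hm : ∑ i ∈ Icc 2 S.p, F.m i ≤ ∑ i ∈ Icc 2 S.p, D.m i :=
    sum_le_sum fun i _ => Nat.cast_le.mpr (card_le_card (hX i))
  have := card_le_card hR
  have := card_le_card hB
  unfold count
  omega

end CDatum

lemma n_sub_one_le_count_inf_of_mutGraph_adj {S : NakSetup} {D E : CDatum S} {hD : D.WellConfigured}
    {hE : E.WellConfigured} (h : (mutGraph S).Adj ⟨D, hD⟩ ⟨E, hE⟩) :
    S.n - 1 ≤ (D.inf E).count := by
  obtain ⟨-, F, -, hX, hR, hB, hcount⟩ := h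
  exact hcount ▸ CDatum.count_mono hX hR hB

lemma mutGraph_adj_of_rigid_inf {S : NakSetup} {D E : CDatum S} (hD : D.WellConfigured)
    (hE : E.WellConfigured) (hne : D ≠ E) (hrigid : (D.inf E).Rigid)
    (hcount : (D.inf E).count = S.n - 1) : (mutGraph S).Adj ⟨D, hD⟩ ⟨E, hE⟩ :=
  ⟨fun h => hne (congrArg Subtype.val h), _, hrigid, fun _ => subset_rfl, subset_rfl, subset_rfl,
    hcount⟩

namespace CDatum

variable {S : NakSetup}

lemma X_eq_empty_of_ne_two (hp2 : S.p = 2) (D : CDatum S) {i : ℤ} (hi : i ≠ 2) : D.X i = ∅ :=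
  D.hXout i (by omega)

lemma ext_of_p_eq_two (hp2 : S.p = 2) {D E : CDatum S} (hX : D.X 2 = E.X 2) (hR : D.R = E.R)
    (hB : D.B = E.B) : D = E := by
  refine ext (funext fun i => ?_) hR hB
  by_cases hi : i = 2
  · exact hi ▸ hX
  · rw [X_eq_empty_of_ne_two hp2 D hi, X_eq_empty_of_ne_two hp2 E hi]

lemma count_eq_of_p_eq_two (hp2 : S.p = 2) (D : CDatum S) :
    D.count = (D.X 2).card + D.R.card + D.B.card := by
  rw [count, hp2, Icc_self, sum_singleton, m]
  ring

lemma RI_two_of_p_eq_two (hp2 : S.p = 2) (D : CDatum S) : D.RI 2 = Icc 1 (S.l - D.lo 2) := by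
  rw [RI, if_neg (by decide), show (2 : ℤ) - 1 = 1 by norm_num, S.s_one_of_p_eq_two hp2]
  congr 1
  ring

lemma BI_two_of_p_eq_two (hp2 : S.p = 2) (D : CDatum S) :
    D.BI 2 = Icc (S.n - D.hi 2 + 1) S.n := by
  rw [BI, if_neg (by decide), S.s_two_of_p_eq_two hp2]

lemma rigid_of_p_eq_two (hp2 : S.p = 2) {D : CDatum S}
    (hgap : ∀ x ∈ D.B, ∀ y ∈ D.R, x < y →
      ∃ z, x < z ∧ z + S.l - 2 < y ∧ Icc z (z + S.l - 2) ∩ (D.R ∪ D.B) = ∅)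
    (hR : Disjoint D.R (Icc 1 (S.l - D.lo 2)))
    (hB : Disjoint D.B (Icc (S.n - D.hi 2 + 1) S.n)) : D.Rigid := by
  refine ⟨hgap, fun i h2 hp hodd => ?_, fun i h2 hp _ => ?_, fun i h2 hp => ?_⟩
  · obtain rfl : i = 2 := by omega
    exact absurd hodd (by decide)
  · obtain rfl : i = 2 := by omega
    have := D.hi_eq_of_X_eq_empty (2 + 1) (X_eq_empty_of_ne_two hp2 D (by decide))
    have := D.lo_eq_of_X_eq_empty (2 - 1) (X_eq_empty_of_ne_two hp2 D (by decide))
    have := D.hi_le 2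
    have := D.one_le_lo 2
    constructor <;> omega
  · obtain rfl : i = 2 := by omega
    rw [RI_two_of_p_eq_two hp2, BI_two_of_p_eq_two hp2]
    exact ⟨disjoint_iff_inter_eq_empty.mp hR, disjoint_iff_inter_eq_empty.mp hB⟩

lemma xiLo_two_of_p_eq_two (hp2 : S.p = 2) (D : CDatum S) : D.xiLo 2 = 1 := by
  rw [xiLo, if_neg (by decide), show (2 : ℤ) - 1 = 1 by norm_num, S.s_one_of_p_eq_two hp2]

lemma xiHi_two_of_p_eq_two (hp2 : S.p = 2) (D : CDatum S) : D.xiHi 2 = S.n := by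
  rw [xiHi, if_pos even_two, S.s_two_of_p_eq_two hp2]

lemma Xi_two_zero_of_p_eq_two (hp2 : S.p = 2) (D : CDatum S) : D.Xi 2 0 = Icc 1 S.n := by
  rw [Xi, add_zero, xiLo_two_of_p_eq_two hp2, xiHi_two_of_p_eq_two hp2]

lemma isSupport_Icc_iff (hp2 : S.p = 2) (D : CDatum S) :
    D.IsSupport (Icc 1 S.n) ↔ D.R = ∅ ∧ D.B = Icc 1 (S.n - D.hi 2) := by
  have hdiff : Icc 1 S.n \ Icc (S.n - D.hi 2 + 1) S.n = Icc 1 (S.n - D.hi 2) := by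
    have := D.hi_le 2
    have := D.zero_le_hi 2
    ext y
    simp only [mem_sdiff, mem_Icc]
    omega
  rw [IsSupport, BigB, hp2, Icc_self, singleton_biUnion, BI_two_of_p_eq_two hp2, hdiff,
    inter_eq_left.mpr D.hR, inter_eq_left.mpr D.hB]

lemma isRigidI_Icc_iff (hp2 : S.p = 2) (D : CDatum S) :
    D.IsRigidI (Icc 1 S.n) ↔ D.B = ∅ ∧ D.R = Icc (S.l - D.lo 2 + 1) S.n := by
  have hdiff : Icc 1 S.n \ Icc 1 (S.l - D.lo 2) = Icc (S.l - D.lo 2 + 1) S.n := by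
    have := D.lo_le 2
    ext y
    simp only [mem_sdiff, mem_Icc]
    omega
  rw [IsRigidI, BigR, hp2, Icc_self, singleton_biUnion, RI_two_of_p_eq_two hp2, hdiff,
    inter_eq_left.mpr D.hR, inter_eq_left.mpr D.hB]

lemma isSuppToRigid_Icc_iff (D : CDatum S) (x : ℤ) :
    D.IsSuppToRigid (Icc 1 S.n) x ↔
      1 ≤ x ∧ x + S.l ≤ S.n ∧ D.B = Icc 1 x ∧ D.R = Icc (x + S.l) S.n := by
  have := S.hl
  rw [IsSuppToRigid, inter_eq_left.mpr D.hR, inter_eq_left.mpr D.hB, mem_Icc]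
  constructor
  · rintro ⟨hx, hB, -, hR, ⟨y, hy⟩⟩
    have hy' := mem_filter.mp (hR ▸ hy)
    rw [mem_Icc] at hy'
    refine ⟨hx.1, by omega, hB.trans ?_, hR.trans ?_⟩ <;>
    · ext z
      simp only [mem_filter, mem_Icc]
      omega
  · rintro ⟨hx1, hxn, hB, hR⟩
    refine ⟨⟨hx1, by omega⟩, hB.trans ?_, hB ▸ nonempty_Icc.mpr hx1, hR.trans ?_,
      hR ▸ nonempty_Icc.mpr hxn⟩ <;>
    · ext z
      simp only [mem_filter, mem_Icc]
      omega

lemma admissible_two_zero_iff (hp2 : S.p = 2) (D : CDatum S) :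
    D.Admissible 2 0 ↔ (D.X 2).Nonempty ∧
      ((D.lo 2 = 1 ∧ D.hi 2 < S.l - 1 ∧ D.IsSupport (Icc 1 S.n)) ∨
       (1 < D.lo 2 ∧ D.hi 2 = S.l - 1 ∧ D.IsRigidI (Icc 1 S.n)) ∨
       (D.lo 2 = 1 ∧ D.hi 2 = S.l - 1 ∧
         (D.IsSupport (Icc 1 S.n) ∨ D.IsRigidI (Icc 1 S.n) ∨
           ∃ x ∈ Icc 1 S.n \ D.BI 2, D.IsSuppToRigid (Icc 1 S.n) x))) := by
  have hne : (∀ j : ℤ, 0 ≤ j → j ≤ 0 → (D.X (2 + j)).Nonempty) ↔ (D.X 2).Nonempty :=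
    ⟨fun h => by simpa using h 0 le_rfl le_rfl,
      fun h j hj0 hj => by rwa [show j = 0 by omega, add_zero]⟩
  simp [Admissible, Xi_two_zero_of_p_eq_two hp2, hne, hp2]

lemma T_eq_empty_iff (hp2 : S.p = 2) (D : CDatum S) : D.T = ∅ ↔ D.X 2 = ∅ := by
  rw [T, hp2, Icc_self, filter_singleton, ite_eq_right_iff, ← not_nonempty_iff_eq_empty]
  simp

lemma isBlock_iff (hp2 : S.p = 2) (D : CDatum S) {a b : ℤ} :
    D.IsBlock a b ↔ a = 2 ∧ b = 2 ∧ (D.X 2).Nonempty := by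
  constructor
  · rintro ⟨ha, hb, hab, hX, -⟩
    obtain ⟨rfl, rfl⟩ : a = 2 ∧ b = 2 := by omega
    exact ⟨rfl, rfl, hX 2 le_rfl le_rfl⟩
  · rintro ⟨rfl, rfl, hX⟩
    refine ⟨le_rfl, hp2.ge, le_rfl, fun j h₁ h₂ => ?_, X_eq_empty_of_ne_two hp2 D (by decide),
      X_eq_empty_of_ne_two hp2 D (by decide)⟩
    rwa [show j = 2 by omega]

lemma not_consecBlocks (hp2 : S.p = 2) (D : CDatum S) {a b a' b' : ℤ} :
    ¬D.ConsecBlocks a b a' b' := by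
  rintro ⟨h, h', hlt, -⟩
  rw [isBlock_iff hp2] at h h'
  omega

lemma wellConfigured_iff_admissible (hp2 : S.p = 2) (D : CDatum S) :
    D.WellConfigured ↔
      (D.X 2 = ∅ ∧ ∃ x, 0 ≤ x ∧ x ≤ S.n ∧ D.R = Icc 1 x ∧ D.B = Icc (x + 1) S.n) ∨
      ((D.X 2).Nonempty ∧ D.Admissible 2 0 ∧ D.Full 2 0) := by
  have hlast : Icc (D.xiHi 2 + 1) S.n = ∅ := by
    rw [xiHi_two_of_p_eq_two hp2, Icc_eq_empty (by omega)]
  have hfirst : Icc 1 (D.xiLo 2 - 1) = ∅ := by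
    rw [xiLo_two_of_p_eq_two hp2, Icc_eq_empty (by omega)]
  have hrigid : D.IsRigidI ∅ := by simp [IsRigidI]
  have hsupp : D.IsSupport ∅ := by simp [IsSupport]
  have hT : D.T.Nonempty ↔ (D.X 2).Nonempty := by
    rw [nonempty_iff_ne_empty, nonempty_iff_ne_empty, ne_eq, ne_eq, T_eq_empty_iff hp2]
  rw [WellConfigured, T_eq_empty_iff hp2, hT]
  refine or_congr_right (and_congr_right fun hne => ?_)
  simp [isBlock_iff hp2, FirstBlock, LastBlock, not_consecBlocks hp2, hne, hfirst, hlast, GoodTheta,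
    hrigid, hsupp]

def NoDiagonalForm (D : CDatum S) (x : ℤ) : Prop :=
  D.X 2 = ∅ ∧ 0 ≤ x ∧ x ≤ S.n ∧ D.R = Icc 1 x ∧ D.B = Icc (x + 1) S.n

def SupportForm (D : CDatum S) (b : ℤ) : Prop :=
  1 ≤ b ∧ b ≤ S.l - 1 ∧ D.X 2 = Icc 1 b ∧ D.R = ∅ ∧ D.B = Icc 1 (S.n - b)

def RigidForm (D : CDatum S) (a : ℤ) : Prop :=
  1 ≤ a ∧ a ≤ S.l - 1 ∧ D.X 2 = Icc a (S.l - 1) ∧ D.B = ∅ ∧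
    D.R = Icc (S.l - a + 1) S.n

def SuppToRigidForm (D : CDatum S) (x : ℤ) : Prop :=
  1 ≤ x ∧ x + S.l ≤ S.n ∧ D.X 2 = Icc 1 (S.l - 1) ∧ D.B = Icc 1 x ∧
    D.R = Icc (x + S.l) S.n

lemma exists_form_of_admissible_full (hp2 : S.p = 2) {D : CDatum S} (hne : (D.X 2).Nonempty)
    (hadm : D.Admissible 2 0) (hfull : D.Full 2 0) :
    (∃ b, D.SupportForm b) ∨ (∃ a, D.RigidForm a) ∨ ∃ x, D.SuppToRigidForm x := by
  rw [full_zero_iff hne] at hfull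
  have := D.lo_le_hi hne
  have := D.one_le_lo 2
  have := D.hi_le 2
  have of_support (hs : D.IsSupport (Icc 1 S.n)) (hlo : D.lo 2 = 1) : ∃ b, D.SupportForm b :=
    ⟨D.hi 2, by omega, by omega, hlo ▸ hfull, (isSupport_Icc_iff hp2 D).mp hs⟩
  have of_rigid (hr : D.IsRigidI (Icc 1 S.n)) (hhi : D.hi 2 = S.l - 1) : ∃ a, D.RigidForm a :=
    ⟨D.lo 2, by omega, by omega, hhi ▸ hfull, (isRigidI_Icc_iff hp2 D).mp hr⟩
  rcases ((admissible_two_zero_iff hp2 D).mp hadm).2 with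
    ⟨hlo, -, hs⟩ | ⟨-, hhi, hr⟩ | ⟨hlo, hhi, hs | hr | ⟨x, -, hx⟩⟩
  · exact Or.inl (of_support hs hlo)
  · exact Or.inr (Or.inl (of_rigid hr hhi))
  · exact Or.inl (of_support hs hlo)
  · exact Or.inr (Or.inl (of_rigid hr hhi))
  · obtain ⟨hx1, hxn, hB, hR⟩ := (isSuppToRigid_Icc_iff D x).mp hx
    exact Or.inr (Or.inr ⟨x, hx1, hxn, by rw [hfull, hlo, hhi], hB, hR⟩)

lemma SupportForm.admissible_full (hp2 : S.p = 2) {D : CDatum S} {b : ℤ} (h : D.SupportForm b) :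
    (D.X 2).Nonempty ∧ D.Admissible 2 0 ∧ D.Full 2 0 := by
  obtain ⟨hb1, hbl, hX, hR, hB⟩ := h
  have hlo := lo_eq_of_X_eq_Icc hb1 hX
  have hhi := hi_eq_of_X_eq_Icc hb1 hX
  have hne : (D.X 2).Nonempty := hX ▸ nonempty_Icc.mpr hb1
  have hs : D.IsSupport (Icc 1 S.n) := (isSupport_Icc_iff hp2 D).mpr ⟨hR, hhi ▸ hB⟩
  refine ⟨hne, (admissible_two_zero_iff hp2 D).mpr ⟨hne, ?_⟩,
    (full_zero_iff hne).mpr (hlo ▸ hhi ▸ hX)⟩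
  rcases hbl.lt_or_eq with hb | hb
  · exact Or.inl ⟨hlo, hhi ▸ hb, hs⟩
  · exact Or.inr (Or.inr ⟨hlo, hhi ▸ hb, Or.inl hs⟩)

lemma RigidForm.admissible_full (hp2 : S.p = 2) {D : CDatum S} {a : ℤ} (h : D.RigidForm a) :
    (D.X 2).Nonempty ∧ D.Admissible 2 0 ∧ D.Full 2 0 := by
  obtain ⟨ha1, hal, hX, hB, hR⟩ := h
  have hlo := lo_eq_of_X_eq_Icc hal hX
  have hhi := hi_eq_of_X_eq_Icc hal hX
  have hne : (D.X 2).Nonempty := hX ▸ nonempty_Icc.mpr hal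
  have hr : D.IsRigidI (Icc 1 S.n) := (isRigidI_Icc_iff hp2 D).mpr ⟨hB, hlo ▸ hR⟩
  refine ⟨hne, (admissible_two_zero_iff hp2 D).mpr ⟨hne, ?_⟩,
    (full_zero_iff hne).mpr (hlo ▸ hhi ▸ hX)⟩
  rcases ha1.lt_or_eq with ha | ha
  · exact Or.inr (Or.inl ⟨hlo ▸ ha, hhi, hr⟩)
  · exact Or.inr (Or.inr ⟨hlo ▸ ha.symm, hhi, Or.inr (Or.inl hr)⟩)

lemma SuppToRigidForm.admissible_full (hp2 : S.p = 2) {D : CDatum S} {x : ℤ}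
    (h : D.SuppToRigidForm x) : (D.X 2).Nonempty ∧ D.Admissible 2 0 ∧ D.Full 2 0 := by
  obtain ⟨hx1, hxn, hX, hB, hR⟩ := h
  have := S.hl
  have hlo := lo_eq_of_X_eq_Icc (by omega) hX
  have hhi := hi_eq_of_X_eq_Icc (by omega) hX
  have hne : (D.X 2).Nonempty := hX ▸ nonempty_Icc.mpr (by omega)
  have hxI : x ∈ Icc 1 S.n \ D.BI 2 := by
    rw [BI_two_of_p_eq_two hp2, hhi, mem_sdiff, mem_Icc, mem_Icc]
    omega
  have hx : D.IsSuppToRigid (Icc 1 S.n) x := (isSuppToRigid_Icc_iff D x).mpr ⟨hx1, hxn, hB, hR⟩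
  refine ⟨hne, (admissible_two_zero_iff hp2 D).mpr
    ⟨hne, Or.inr (Or.inr ⟨hlo, hhi, Or.inr (Or.inr ⟨x, hxI, hx⟩)⟩)⟩,
    (full_zero_iff hne).mpr (hlo ▸ hhi ▸ hX)⟩

theorem wellConfigured_iff_of_p_eq_two (hp2 : S.p = 2) (D : CDatum S) :
    D.WellConfigured ↔ (∃ x, D.NoDiagonalForm x) ∨ (∃ b, D.SupportForm b) ∨
      (∃ a, D.RigidForm a) ∨ ∃ x, D.SuppToRigidForm x := by
  rw [wellConfigured_iff_admissible hp2, ← exists_and_left]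
  refine or_congr_right ⟨fun ⟨hne, hadm, hfull⟩ =>
    exists_form_of_admissible_full hp2 hne hadm hfull, ?_⟩
  rintro (⟨b, h⟩ | ⟨a, h⟩ | ⟨x, h⟩)
  exacts [h.admissible_full hp2, h.admissible_full hp2, h.admissible_full hp2]

/-- Place the summands on `ℤ / (2n + l - 1)`: `y ∈ B` at `y`, `y ∈ R` at `n + y` and
`y ∈ X 2` at `2n + l - y`. Then `cycle hp2 t` consists of the summands in the window
`(t, t + n]`. -/
noncomputable def cycle (hp2 : S.p = 2) (t : ℤ) : CDatum S where
  X i := if i = 2 then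
    {y ∈ Icc 1 (S.l - 1) | S.n + S.l ≤ y + t ∧ y + t ≤ 2 * S.n + S.l - 1} else ∅
  R := {y ∈ Icc 1 S.n | t - S.n < y ∧ y ≤ t}
  B := {y ∈ Icc 1 S.n | t < y ∨ y ≤ t - S.n - S.l + 1}
  hX i := by
    split_ifs
    · exact filter_subset _ _
    · exact empty_subset _
  hXout i hi := if_neg (by omega)
  hR := filter_subset _ _
  hB := filter_subset _ _
  hRB := by
    rw [disjoint_left]
    intro y hR hB
    have := S.hl
    rw [mem_filter] at hR hB
    omega

section Cycle

variable (hp2 : S.p = 2) {t : ℤ}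

lemma mem_cycle_X_two {y : ℤ} : y ∈ (cycle hp2 t).X 2 ↔
    1 ≤ y ∧ y ≤ S.l - 1 ∧ S.n + S.l ≤ y + t ∧ y + t ≤ 2 * S.n + S.l - 1 := by
  simp [cycle, and_assoc]

lemma mem_cycle_R {y : ℤ} :
    y ∈ (cycle hp2 t).R ↔ 1 ≤ y ∧ y ≤ S.n ∧ t - S.n < y ∧ y ≤ t := by
  simp [cycle, and_assoc]

lemma mem_cycle_B {y : ℤ} :
    y ∈ (cycle hp2 t).B ↔ 1 ≤ y ∧ y ≤ S.n ∧ (t < y ∨ y ≤ t - S.n - S.l + 1) := by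
  simp [cycle, and_assoc]

lemma cycle_wellConfigured (h0 : 0 ≤ t) (h1 : t ≤ 2 * S.n + S.l - 2) :
    (cycle hp2 t).WellConfigured := by
  have := S.hl
  have := S.l_lt_n_of_p_eq_two hp2
  rw [wellConfigured_iff_of_p_eq_two hp2]
  by_cases hempty : t ≤ S.n
  · refine Or.inl ⟨t, ?_, h0, hempty, ?_, ?_⟩ <;> ext y <;>
      simp only [mem_cycle_X_two, mem_cycle_R, mem_cycle_B, mem_Icc, notMem_empty, iff_false] <;>
      omega
  by_cases hrigid : t ≤ S.n + S.l - 1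
  · refine Or.inr (Or.inr (Or.inl ⟨S.n + S.l - t, by omega, by omega, ?_, ?_, ?_⟩)) <;>
      ext y <;>
      simp only [mem_cycle_X_two, mem_cycle_R, mem_cycle_B, mem_Icc, notMem_empty, iff_false] <;>
      omega
  by_cases hsupp : 2 * S.n ≤ t
  · refine Or.inr (Or.inl ⟨2 * S.n + S.l - 1 - t, by omega, by omega, ?_, ?_, ?_⟩) <;>
      ext y <;>
      simp only [mem_cycle_X_two, mem_cycle_R, mem_cycle_B, mem_Icc, notMem_empty, iff_false] <;>
      omega
  refine Or.inr (Or.inr (Or.inr ⟨t - S.n - S.l + 1, by omega, by omega, ?_, ?_, ?_⟩)) <;>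
    ext y <;>
    simp only [mem_cycle_X_two, mem_cycle_R, mem_cycle_B, mem_Icc] <;> omega

lemma eq_cycle_of_wellConfigured {D : CDatum S} (hD : D.WellConfigured) :
    ∃ t, 0 ≤ t ∧ t ≤ 2 * S.n + S.l - 2 ∧ D = cycle hp2 t := by
  have := S.hl
  have := S.l_lt_n_of_p_eq_two hp2
  rcases (wellConfigured_iff_of_p_eq_two hp2 D).mp hD with
    ⟨x, hX, hx0, hxn, hR, hB⟩ | ⟨b, hb1, hbl, hX, hR, hB⟩ | ⟨a, ha1, hal, hX, hB, hR⟩ |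
      ⟨x, hx1, hxn, hX, hB, hR⟩
  · refine ⟨x, hx0, by omega, ext_of_p_eq_two hp2 ?_ ?_ ?_⟩ <;> ext y <;>
      simp only [hX, hR, hB, mem_cycle_X_two, mem_cycle_R, mem_cycle_B, mem_Icc,
        notMem_empty, false_iff] <;> omega
  · refine ⟨2 * S.n + S.l - 1 - b, by omega, by omega, ext_of_p_eq_two hp2 ?_ ?_ ?_⟩ <;>
      ext y <;>
      simp only [hX, hR, hB, mem_cycle_X_two, mem_cycle_R, mem_cycle_B, mem_Icc,
        notMem_empty, false_iff] <;> omega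
  · refine ⟨S.n + S.l - a, by omega, by omega, ext_of_p_eq_two hp2 ?_ ?_ ?_⟩ <;> ext y <;>
      simp only [hX, hR, hB, mem_cycle_X_two, mem_cycle_R, mem_cycle_B, mem_Icc,
        notMem_empty, false_iff] <;> omega
  · refine ⟨S.n + S.l - 1 + x, by omega, by omega, ext_of_p_eq_two hp2 ?_ ?_ ?_⟩ <;> ext y <;>
      simp only [hX, hR, hB, mem_cycle_X_two, mem_cycle_R, mem_cycle_B, mem_Icc] <;> omega

lemma cycle_eq_Icc_of_le (h0 : 0 ≤ t) (ht : t ≤ S.n) :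
    (cycle hp2 t).X 2 = ∅ ∧ (cycle hp2 t).R = Icc 1 t ∧
      (cycle hp2 t).B = Icc (t + 1) S.n := by
  have := S.hl
  refine ⟨?_, ?_, ?_⟩ <;> ext y <;>
    simp only [mem_cycle_X_two, mem_cycle_R, mem_cycle_B, mem_Icc, notMem_empty, iff_false] <;>
    omega

lemma cycle_eq_Icc_of_lt (ht : S.n < t) (h1 : t ≤ 2 * S.n + S.l - 2) :
    (cycle hp2 t).X 2 = Icc (max 1 (S.n + S.l - t)) (min (S.l - 1) (2 * S.n + S.l - 1 - t)) ∧
      (cycle hp2 t).R = Icc (t - S.n + 1) S.n ∧ (cycle hp2 t).B = Icc 1 (t - S.n - S.l + 1) := by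
  refine ⟨?_, ?_, ?_⟩ <;> ext y <;>
    simp only [mem_cycle_X_two, mem_cycle_R, mem_cycle_B, mem_Icc] <;> omega

lemma count_cycle (h0 : 0 ≤ t) (h1 : t ≤ 2 * S.n + S.l - 2) : (cycle hp2 t).count = S.n := by
  have := S.hl
  have := S.l_lt_n_of_p_eq_two hp2
  rw [count_eq_of_p_eq_two hp2]
  rcases le_or_gt t S.n with ht | ht
  · obtain ⟨hX, hR, hB⟩ := cycle_eq_Icc_of_le hp2 h0 ht
    rw [hX, hR, hB, card_empty]
    simp only [Int.card_Icc, Int.toNat_eq_max]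
    omega
  · obtain ⟨hX, hR, hB⟩ := cycle_eq_Icc_of_lt hp2 ht h1
    rw [hX, hR, hB]
    simp only [Int.card_Icc, Int.toNat_eq_max]
    omega

lemma count_inf_cycle {t' : ℤ} (h0 : 0 ≤ t) (hlt : t < t') (h1 : t' ≤ 2 * S.n + S.l - 2) :
    ((cycle hp2 t).inf (cycle hp2 t')).count ≤ S.n - 1 ∧
      (((cycle hp2 t).inf (cycle hp2 t')).count = S.n - 1 ↔
        t' = t + 1 ∨ (t = 0 ∧ t' = 2 * S.n + S.l - 2)) := by
  have := S.hl
  have := S.l_lt_n_of_p_eq_two hp2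
  rw [count_eq_of_p_eq_two hp2, inf_X, inf_R, inf_B]
  rcases le_or_gt t' S.n with ht' | ht'
  · obtain ⟨hX, hR, hB⟩ := cycle_eq_Icc_of_le hp2 h0 (hlt.le.trans ht')
    obtain ⟨hX', hR', hB'⟩ := cycle_eq_Icc_of_le hp2 (h0.trans hlt.le) ht'
    rw [hX, hR, hB, hR', hB', empty_inter, Icc_inter_Icc_eq, Icc_inter_Icc_eq, card_empty]
    simp only [Int.card_Icc, Int.toNat_eq_max]
    omega
  obtain ⟨hX', hR', hB'⟩ := cycle_eq_Icc_of_lt hp2 ht' h1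
  rcases le_or_gt t S.n with ht | ht
  · obtain ⟨hX, hR, hB⟩ := cycle_eq_Icc_of_le hp2 h0 ht
    rw [hX, hR, hB, hR', hB', empty_inter, Icc_inter_Icc_eq, Icc_inter_Icc_eq, card_empty]
    simp only [Int.card_Icc, Int.toNat_eq_max]
    omega
  · obtain ⟨hX, hR, hB⟩ := cycle_eq_Icc_of_lt hp2 ht (by omega)
    rw [hX, hR, hB, hX', hR', hB', Icc_inter_Icc_eq, Icc_inter_Icc_eq, Icc_inter_Icc_eq]
    simp only [Int.card_Icc, Int.toNat_eq_max]
    omega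

lemma cycle_ne_cycle {t' : ℤ} (h0 : 0 ≤ t) (hlt : t < t') (h1 : t' ≤ 2 * S.n + S.l - 2) :
    cycle hp2 t ≠ cycle hp2 t' := by
  intro h
  have := (count_inf_cycle hp2 h0 hlt h1).1
  rw [← h, inf_self, count_cycle hp2 h0 (by omega)] at this
  omega

lemma rigid_inf_cycle {t' : ℤ} :
    ((cycle hp2 t).inf (cycle hp2 t')).Rigid := by
  have := S.hl
  refine rigid_of_p_eq_two hp2 (fun x hx y hy hxy => ?_) (disjoint_left.mpr fun y hR hI => ?_)
    (disjoint_left.mpr fun y hB hI => ?_)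
  · simp only [inf_R, inf_B, mem_inter, mem_cycle_R, mem_cycle_B] at hx hy
    refine ⟨t - S.n - S.l + 2, by omega, by omega, ?_⟩
    ext w
    simp only [inf_R, inf_B, mem_inter, mem_union, mem_cycle_R, mem_cycle_B, mem_Icc,
      notMem_empty, iff_false]
    omega
  · simp only [inf_R, mem_inter, mem_cycle_R, mem_Icc] at hR hI
    rcases (((cycle hp2 t).inf (cycle hp2 t')).X 2).eq_empty_or_nonempty with hX | hX
    · rw [lo_eq_of_X_eq_empty _ _ hX] at hI
      omega
    · have := lo_mem _ _ hX
      simp only [inf_X, mem_inter, mem_cycle_X_two] at this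
      omega
  · simp only [inf_B, mem_inter, mem_cycle_B, mem_Icc] at hB hI
    rcases (((cycle hp2 t).inf (cycle hp2 t')).X 2).eq_empty_or_nonempty with hX | hX
    · rw [hi_eq_of_X_eq_empty _ _ hX] at hI
      omega
    · have := hi_mem _ _ hX
      simp only [inf_X, mem_inter, mem_cycle_X_two] at this
      omega

end Cycle

end CDatum

section MutationCycle

open CDatum

variable {S : NakSetup}

lemma mutGraph_adj_cycle_iff (hp2 : S.p = 2) {t t' : ℤ} (h0 : 0 ≤ t) (hlt : t < t')
    (h1 : t' ≤ 2 * S.n + S.l - 2) :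
    (mutGraph S).Adj ⟨cycle hp2 t, cycle_wellConfigured hp2 h0 (by omega)⟩
        ⟨cycle hp2 t', cycle_wellConfigured hp2 (by omega) h1⟩ ↔
      t' = t + 1 ∨ (t = 0 ∧ t' = 2 * S.n + S.l - 2) := by
  have hcount := count_inf_cycle hp2 h0 hlt h1
  constructor
  · intro h
    exact hcount.2.mp (le_antisymm hcount.1 (n_sub_one_le_count_inf_of_mutGraph_adj h))
  · intro h
    exact mutGraph_adj_of_rigid_inf _ _ (cycle_ne_cycle hp2 h0 hlt h1) (rigid_inf_cycle hp2)
      (hcount.2.mpr h)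

def cycleLength (S : NakSetup) : ℕ := (2 * S.n + S.l - 1).toNat

lemma cycleLength_eq (hp2 : S.p = 2) : (cycleLength S : ℤ) = 2 * S.n + S.l - 1 := by
  have := S.hl
  have := S.l_lt_n_of_p_eq_two hp2
  rw [cycleLength, Int.toNat_of_nonneg (by omega)]

lemma three_le_cycleLength (hp2 : S.p = 2) : 3 ≤ cycleLength S := by
  have := cycleLength_eq hp2
  have := S.hl
  have := S.l_lt_n_of_p_eq_two hp2
  omega

noncomputable def cycleVertex (hp2 : S.p = 2) (k : Fin (cycleLength S)) :
    {D : CDatum S // D.WellConfigured} :=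
  ⟨cycle hp2 k, cycle_wellConfigured hp2 (by omega) (by have := cycleLength_eq hp2; omega)⟩

lemma cycleVertex_bijective (hp2 : S.p = 2) : Function.Bijective (cycleVertex hp2) := by
  have hN := cycleLength_eq hp2
  refine ⟨fun u v huv => ?_, fun D => ?_⟩
  · by_contra hne
    rcases lt_or_gt_of_ne hne with h | h
    · exact cycle_ne_cycle hp2 (by omega) (by omega) (by omega) (congrArg Subtype.val huv)
    · exact cycle_ne_cycle hp2 (by omega) (by omega) (by omega) (congrArg Subtype.val huv).symm
  · obtain ⟨t, h0, h1, ht⟩ := eq_cycle_of_wellConfigured hp2 D.2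
    exact ⟨⟨t.toNat, by omega⟩,
      Subtype.ext (by simp [cycleVertex, ht, Int.toNat_of_nonneg h0])⟩

lemma mutGraph_adj_cycleVertex_iff (hp2 : S.p = 2) {u v : Fin (cycleLength S)} :
    (mutGraph S).Adj (cycleVertex hp2 u) (cycleVertex hp2 v) ↔
      (SimpleGraph.cycleGraph (cycleLength S)).Adj u v := by
  have hN := cycleLength_eq hp2
  have hN3 := three_le_cycleLength hp2
  rw [SimpleGraph.cycleGraph_adj_iff_val hN3]
  rcases lt_trichotomy u v with h | rfl | h
  · rw [Fin.lt_def] at h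
    rw [cycleVertex, cycleVertex, mutGraph_adj_cycle_iff hp2 (by omega) (by omega) (by omega)]
    omega
  · simp only [SimpleGraph.irrefl, false_iff]
    omega
  · rw [Fin.lt_def] at h
    rw [SimpleGraph.adj_comm, cycleVertex, cycleVertex,
      mutGraph_adj_cycle_iff hp2 (by omega) (by omega) (by omega)]
    omega

noncomputable def mutGraphIsoCycleGraph (hp2 : S.p = 2) :
    SimpleGraph.cycleGraph (cycleLength S) ≃g mutGraph S where
  toEquiv := Equiv.ofBijective _ (cycleVertex_bijective hp2)
  map_rel_iff' := mutGraph_adj_cycleVertex_iff hp2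

end MutationCycle

/-- if `p = 2`, the mutation graph of well-configured `C`-data has
exactly `2n + l - 1` vertices, is connected, and every vertex has exactly two
neighbours (so it is a cycle on `2n + l - 1` vertices). -/
theorem stmt18 (S : NakSetup) (hp2 : S.p = 2) :
    (Nat.card {D : CDatum S // D.WellConfigured} : ℤ) = 2 * S.n + S.l - 1 ∧
    (mutGraph S).Connected ∧
    ∀ v, Nat.card ((mutGraph S).neighborSet v) = 2 := by
  let e := mutGraphIsoCycleGraph hp2
  have hN := three_le_cycleLength hp2
  refine ⟨?_, e.connected_of_cycleGraph (by omega), e.nat_card_neighborSet_of_cycleGraph hN⟩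
  rw [← Nat.card_congr e.toEquiv, Nat.card_fin, cycleLength_eq hp2]
end

section
/- Let (X_i, R, B) be a C-datum and let 2 ≤ i ≤ p with X_i ≠ ∅. Then ⋃_{h ∈ X_i} 𝒫_i(h) ⊆ Ξ_i, and if m_i = l − 1 then ⋃_{h ∈ X_i} 𝒫_i(h) = Ξ_i. (This is the combinatorial form of the paper's corollary: the indices of the indecomposable projectives occurring in the truncated minimal projective resolutions σ_{≥−d}P•(X) of the indecomposable summands X of M_i all lie in Ξ_i, with equality when m_i = l − 1.) -/
open scoped Classical

/-- `𝒫_i(h)`: the set of indices in `[1, n]` of the indecomposable projectives in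
the truncated minimal projective resolution of the indecomposable module of
length `h` on the `i`-th diagonal. -/
noncomputable def projP (S : NakSetup) (i h : ℤ) : Finset ℤ :=
  ((Finset.Icc 0 S.d).image fun j =>
      if Even j then (if Odd i then S.s i + h - 1 else S.s i) - j / 2 * S.l
      else (if Odd i then S.s i else S.s i - h + 1) - (j - 1) / 2 * S.l - 1) ∩
    Finset.Icc 1 S.n

/-- for a `C`-datum and `2 ≤ i ≤ p` with `X i ≠ ∅`,
`⋃_{h ∈ X_i} 𝒫_i(h) ⊆ Ξ_i`, with equality when `m_i = l - 1`. -/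
theorem stmt19 {S : NakSetup} (D : CDatum S) (i : ℤ)
    (h2i : 2 ≤ i) (hip : i ≤ S.p) (hne : (D.X i).Nonempty) :
    (((D.X i).biUnion fun h => projP S i h) ⊆ D.Xi i 0) ∧
    (D.m i = S.l - 1 → ((D.X i).biUnion fun h => projP S i h) = D.Xi i 0) := by
  have hl := S.hl
  have hd := S.hd
  have hlo_mem : D.lo i ∈ D.X i := by
    rw [CDatum.lo, dif_pos hne]; exact (D.X i).min'_mem hne
  have hhi_mem : D.hi i ∈ D.X i := by
    rw [CDatum.hi, dif_pos hne]; exact (D.X i).max'_mem hne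
  have hlo_bds := Finset.mem_Icc.mp (D.hX i hlo_mem)
  have hhi_bds := Finset.mem_Icc.mp (D.hX i hhi_mem)
  have hloh : ∀ h ∈ D.X i, D.lo i ≤ h ∧ h ≤ D.hi i := fun h hh =>
    ⟨by rw [CDatum.lo, dif_pos hne]; exact Finset.min'_le _ _ hh,
     by rw [CDatum.hi, dif_pos hne]; exact Finset.le_max' _ _ hh⟩
  have hmem : ∀ h x : ℤ, x ∈ projP S i h ↔
      ((∃ j, 0 ≤ j ∧ j ≤ S.d ∧
        (if Even j then (if Odd i then S.s i + h - 1 else S.s i) - j / 2 * S.l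
         else (if Odd i then S.s i else S.s i - h + 1) - (j - 1) / 2 * S.l - 1) = x) ∧
       1 ≤ x ∧ x ≤ S.n) := by
    intro h x
    simp only [projP, Finset.mem_inter, Finset.mem_image, Finset.mem_Icc]
    constructor
    · rintro ⟨⟨j, ⟨hj0, hjd⟩, hfx⟩, hx1, hxn⟩; exact ⟨⟨j, hj0, hjd, hfx⟩, hx1, hxn⟩
    · rintro ⟨⟨j, hj0, hjd, hfx⟩, hx1, hxn⟩; exact ⟨⟨j, ⟨hj0, hjd⟩, hfx⟩, hx1, hxn⟩
  have hcardX : D.m i = S.l - 1 → D.X i = Finset.Icc 1 (S.l - 1) := by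
    intro hm
    apply Finset.eq_of_subset_of_card_le (D.hX i)
    have hm' : ((D.X i).card : ℤ) = S.l - 1 := hm
    rw [Int.card_Icc]
    omega
  rcases Int.even_or_odd i with hie | hio
  · -- i even
    have hno : ¬ Odd i := by simpa [Int.not_odd_iff_even] using hie
    have hi1odd : Odd (i - 1) := by
      obtain ⟨c, hc⟩ := hie; exact ⟨c - 1, by omega⟩
    have h1 := S.hs_even i (by omega) hip hie
    have h2 := S.hs_odd (i - 1) (by omega) (by omega) hi1odd
    have hsd : 2 * (S.s i - S.s (i - 1)) = S.d * S.l := by linear_combination h1 - h2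
    have hXi : D.Xi i 0 = Finset.Icc (S.s (i - 1)) (S.s i) := by
      simp [CDatum.Xi, CDatum.xiLo, CDatum.xiHi, hno, hie]
    have hdl : (0:ℤ) ≤ (S.d - 1) * S.l := mul_nonneg (by omega) (by omega)
    have hs1 : 1 ≤ S.s (i - 1) := by
      have q : (0:ℤ) ≤ (i - 1 - 1) * (S.d - 1) * S.l :=
        mul_nonneg (mul_nonneg (by omega) (by omega)) (by omega)
      linarith [h2, q]
    have hsn : S.s i ≤ S.n := by
      have q : (0:ℤ) ≤ (S.p - i) * ((S.d - 1) * S.l + 2) :=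
        mul_nonneg (by omega) (by linarith)
      have e : 2 * (S.n - S.s i) = (S.p - i) * ((S.d - 1) * S.l + 2) := by
        linear_combination S.hn - h1
      linarith
    have hsub : ((D.X i).biUnion fun h => projP S i h) ⊆ D.Xi i 0 := by
      intro x hx
      rw [Finset.mem_biUnion] at hx
      obtain ⟨h, hh, hxp⟩ := hx
      rw [hmem] at hxp
      obtain ⟨⟨j, hj0, hjd, hfx⟩, hx1, hxn⟩ := hxp
      obtain ⟨hh1, hh2⟩ := Finset.mem_Icc.mp (D.hX i hh)
      rw [hXi, Finset.mem_Icc]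
      by_cases hje : Even j
      · rw [if_pos hje, if_neg hno] at hfx
        have hj2 : j % 2 = 0 := Int.even_iff.mp hje
        obtain ⟨t, hjt, ht0, htd⟩ : ∃ t : ℤ, j / 2 = t ∧ 0 ≤ t ∧ 2 * t ≤ S.d :=
          ⟨j / 2, rfl, by omega, by omega⟩
        rw [hjt] at hfx
        have k1 : (0:ℤ) ≤ t * S.l := mul_nonneg ht0 (by omega)
        have k2 : (0:ℤ) ≤ (S.d - 2 * t) * S.l := mul_nonneg (by omega) (by omega)
        constructor <;> linarith [hsd, k1, k2]
      · rw [if_neg hje, if_neg hno] at hfx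
        have hj2 : j % 2 = 1 := Int.not_even_iff.mp hje
        obtain ⟨t, hjt, ht0, htd⟩ : ∃ t : ℤ, (j - 1) / 2 = t ∧ 0 ≤ t ∧ 2 * t + 1 ≤ S.d :=
          ⟨(j - 1) / 2, rfl, by omega, by omega⟩
        rw [hjt] at hfx
        have k1 : (0:ℤ) ≤ t * S.l := mul_nonneg ht0 (by omega)
        have key : 2 * h ≤ (S.d - 2 * t) * S.l := by
          rcases S.hcase with hl2 | ⟨_, hde, _⟩
          · have q : S.l ≤ (S.d - 2 * t) * S.l :=
              le_mul_of_one_le_left (by omega) (by omega)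
            linarith
          · obtain ⟨c, hc⟩ := hde
            have q : 2 * S.l ≤ (S.d - 2 * t) * S.l :=
              mul_le_mul_of_nonneg_right (by omega) (by omega)
            linarith
        constructor <;> linarith [hsd, k1, key]
    refine ⟨hsub, fun hm => Finset.Subset.antisymm hsub ?_⟩
    have hcard := hcardX hm
    intro x hx
    rw [hXi, Finset.mem_Icc] at hx
    rw [Finset.mem_biUnion]
    have hx1 : 1 ≤ x := by linarith [hs1]
    have hxn : x ≤ S.n := by linarith [hsn]
    have hr0 : 0 ≤ S.s i - x := by omega
    have hrd : 2 * (S.s i - x) ≤ S.d * S.l := by linarith [hsd]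
    obtain ⟨t, u, ht0, hu0, hul, hdm⟩ :
        ∃ t u : ℤ, 0 ≤ t ∧ 0 ≤ u ∧ u < S.l ∧ S.l * t + u = S.s i - x :=
      ⟨(S.s i - x) / S.l, (S.s i - x) % S.l,
        Int.ediv_nonneg hr0 (by omega), Int.emod_nonneg _ (by omega),
        Int.emod_lt_of_pos _ (by omega), Int.mul_ediv_add_emod _ _⟩
    have htd : 2 * t ≤ S.d := by
      have q : S.l * (2 * t) ≤ S.l * S.d := by linarith
      linarith [le_of_mul_le_mul_left q (by omega : (0:ℤ) < S.l)]
    by_cases huz : u = 0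
    · refine ⟨1, by rw [hcard, Finset.mem_Icc]; omega, ?_⟩
      rw [hmem]
      refine ⟨⟨2 * t, by omega, by omega, ?_⟩, hx1, hxn⟩
      have hej : Even (2 * t) := ⟨t, by ring⟩
      rw [if_pos hej, if_neg hno]
      have he : (2 * t) / 2 = t := by omega
      rw [he]
      linarith
    · have hu1 : 1 ≤ u := by omega
      have htd' : 2 * t + 1 ≤ S.d := by
        have q : S.l * (2 * t) < S.l * S.d := by linarith
        have := lt_of_mul_lt_mul_left q (by omega : (0:ℤ) ≤ S.l)
        omega
      refine ⟨u, by rw [hcard, Finset.mem_Icc]; omega, ?_⟩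
      rw [hmem]
      refine ⟨⟨2 * t + 1, by omega, by omega, ?_⟩, hx1, hxn⟩
      have hoj : ¬ Even (2 * t + 1) := by rw [Int.even_iff]; omega
      rw [if_neg hoj, if_neg hno]
      have he : (2 * t + 1 - 1) / 2 = t := by omega
      rw [he]
      linarith
  · -- i odd
    have hnev : ¬ Even i := by simpa [Int.not_even_iff_odd] using hio
    have h3i : 3 ≤ i := by obtain ⟨c, hc⟩ := hio; omega
    have hi1even : Even (i - 1) := by
      obtain ⟨c, hc⟩ := hio; exact ⟨c, by omega⟩
    have h1 := S.hs_odd i (by omega) hip hio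
    have h2 := S.hs_even (i - 1) (by omega) (by omega) hi1even
    have hsd : 2 * (S.s i - S.s (i - 1)) = (S.d - 2) * S.l + 4 := by
      linear_combination h1 - h2
    have hXi : D.Xi i 0 =
        Finset.Icc (S.s (i - 1) - (S.l - D.lo i) + 1) (S.s i + D.hi i - 1) := by
      simp [CDatum.Xi, CDatum.xiLo, CDatum.xiHi, hio, hnev]
    have hdl : (0:ℤ) ≤ (S.d - 1) * S.l := mul_nonneg (by omega) (by omega)
    have hs1' : 2 * S.l + 2 ≤ 2 * S.s (i - 1) := by
      have q1 : (S.d - 1) * S.l + 2 ≤ (i - 1 - 1) * ((S.d - 1) * S.l + 2) :=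
        le_mul_of_one_le_left (by linarith) (by omega)
      have q2 : S.l ≤ (S.d - 1) * S.l := le_mul_of_one_le_left (by omega) (by omega)
      linarith [h2, q1, q2]
    have hupper : 2 * (S.n - S.s i) =
        (S.p - i) * (S.d - 1) * S.l + 2 * (S.p - i) + S.l - 2 := by
      linear_combination S.hn - h1
    have hsn' : S.s i + S.l - 2 ≤ S.n := by
      rcases eq_or_lt_of_le hip with heq | hlt
      · have hl2 : S.l = 2 := by
          rcases S.hcase with h' | ⟨_, _, hpe⟩
          · exact h'
          · exfalso; obtain ⟨c, hc⟩ := hpe; obtain ⟨c', hc'⟩ := hio; omega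
        have h0 : S.p - i = 0 := by omega
        rw [h0] at hupper
        linarith
      · have q2 : S.l ≤ (S.d - 1) * S.l := le_mul_of_one_le_left (by omega) (by omega)
        have q3 : (S.d - 1) * S.l ≤ (S.p - i) * ((S.d - 1) * S.l) :=
          le_mul_of_one_le_left (by linarith) (by omega)
        have q1 : S.l ≤ (S.p - i) * (S.d - 1) * S.l := by
          have : (S.p - i) * ((S.d - 1) * S.l) = (S.p - i) * (S.d - 1) * S.l := by ring
          linarith [q2, q3]
        linarith [hupper, q1]
    have hsub : ((D.X i).biUnion fun h => projP S i h) ⊆ D.Xi i 0 := by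
      intro x hx
      rw [Finset.mem_biUnion] at hx
      obtain ⟨h, hh, hxp⟩ := hx
      rw [hmem] at hxp
      obtain ⟨⟨j, hj0, hjd, hfx⟩, hx1, hxn⟩ := hxp
      obtain ⟨hh1, hh2⟩ := Finset.mem_Icc.mp (D.hX i hh)
      obtain ⟨hhlo, hhhi⟩ := hloh h hh
      rw [hXi, Finset.mem_Icc]
      by_cases hje : Even j
      · rw [if_pos hje, if_pos hio] at hfx
        have hj2 : j % 2 = 0 := Int.even_iff.mp hje
        obtain ⟨t, hjt, ht0, htd⟩ : ∃ t : ℤ, j / 2 = t ∧ 0 ≤ t ∧ 2 * t ≤ S.d :=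
          ⟨j / 2, rfl, by omega, by omega⟩
        rw [hjt] at hfx
        have k1 : (0:ℤ) ≤ t * S.l := mul_nonneg ht0 (by omega)
        have k2 : (0:ℤ) ≤ (S.d - 2 * t) * S.l := mul_nonneg (by omega) (by omega)
        constructor <;> linarith [hsd, k1, k2]
      · rw [if_neg hje, if_pos hio] at hfx
        have hj2 : j % 2 = 1 := Int.not_even_iff.mp hje
        obtain ⟨t, hjt, ht0, htd⟩ : ∃ t : ℤ, (j - 1) / 2 = t ∧ 0 ≤ t ∧ 2 * t + 1 ≤ S.d :=
          ⟨(j - 1) / 2, rfl, by omega, by omega⟩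
        rw [hjt] at hfx
        have k1 : (0:ℤ) ≤ t * S.l := mul_nonneg ht0 (by omega)
        have key : 2 * D.lo i ≤ (S.d - 2 * t) * S.l := by
          rcases S.hcase with hl2 | ⟨_, hde, _⟩
          · have q : S.l ≤ (S.d - 2 * t) * S.l :=
              le_mul_of_one_le_left (by omega) (by omega)
            omega
          · obtain ⟨c, hc⟩ := hde
            have q : 2 * S.l ≤ (S.d - 2 * t) * S.l :=
              mul_le_mul_of_nonneg_right (by omega) (by omega)
            linarith
        constructor <;> linarith [hsd, k1, key]
    refine ⟨hsub, fun hm => Finset.Subset.antisymm hsub ?_⟩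
    have hcard := hcardX hm
    have hlo1 : D.lo i = 1 := by
      have h1m : (1:ℤ) ∈ D.X i := by rw [hcard, Finset.mem_Icc]; omega
      have := (hloh 1 h1m).1
      omega
    have hhi1 : D.hi i = S.l - 1 := by
      have h1m : (S.l - 1) ∈ D.X i := by rw [hcard, Finset.mem_Icc]; omega
      have := (hloh (S.l - 1) h1m).2
      omega
    intro x hx
    rw [hXi, hlo1, hhi1, Finset.mem_Icc] at hx
    rw [Finset.mem_biUnion]
    have hx1 : 1 ≤ x := by linarith [hs1']
    have hxn : x ≤ S.n := by linarith [hsn']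
    by_cases hxs : S.s i ≤ x
    · refine ⟨x - S.s i + 1, by rw [hcard, Finset.mem_Icc]; omega, ?_⟩
      rw [hmem]
      refine ⟨⟨0, le_refl 0, by omega, ?_⟩, hx1, hxn⟩
      have hz : (0:ℤ) / 2 * S.l = 0 := by norm_num
      rw [if_pos (Even.zero), if_pos hio, hz]
      ring
    · have hr0 : 0 ≤ S.s i - x := by omega
      have hrd : 2 * (S.s i - x) ≤ S.d * S.l := by linarith [hsd]
      obtain ⟨t, u, ht0, hu0, hul, hdm⟩ :
          ∃ t u : ℤ, 0 ≤ t ∧ 0 ≤ u ∧ u < S.l ∧ S.l * t + u = S.s i - x :=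
        ⟨(S.s i - x) / S.l, (S.s i - x) % S.l,
          Int.ediv_nonneg hr0 (by omega), Int.emod_nonneg _ (by omega),
          Int.emod_lt_of_pos _ (by omega), Int.mul_ediv_add_emod _ _⟩
      have htd : 2 * t ≤ S.d := by
        have q : S.l * (2 * t) ≤ S.l * S.d := by linarith
        linarith [le_of_mul_le_mul_left q (by omega : (0:ℤ) < S.l)]
      by_cases huz : u = 0
      · refine ⟨1, by rw [hcard, Finset.mem_Icc]; omega, ?_⟩
        rw [hmem]
        refine ⟨⟨2 * t, by omega, by omega, ?_⟩, hx1, hxn⟩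
        have hej : Even (2 * t) := ⟨t, by ring⟩
        rw [if_pos hej, if_pos hio]
        have he : (2 * t) / 2 = t := by omega
        rw [he]
        linarith
      · by_cases hu1 : u = 1
        · have hu1' : 1 ≤ u := by omega
          have htd' : 2 * t + 1 ≤ S.d := by
            have q : S.l * (2 * t) < S.l * S.d := by linarith
            have := lt_of_mul_lt_mul_left q (by omega : (0:ℤ) ≤ S.l)
            omega
          refine ⟨1, by rw [hcard, Finset.mem_Icc]; omega, ?_⟩
          rw [hmem]
          refine ⟨⟨2 * t + 1, by omega, by omega, ?_⟩, hx1, hxn⟩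
          have hoj : ¬ Even (2 * t + 1) := by rw [Int.even_iff]; omega
          rw [if_neg hoj, if_pos hio]
          have he : (2 * t + 1 - 1) / 2 = t := by omega
          rw [he]
          linarith
        · have hu2 : 2 ≤ u := by omega
          have hl3 : 3 ≤ S.l := by omega
          have hde : Even S.d := by
            rcases S.hcase with h' | ⟨_, h'', _⟩
            · omega
            · exact h''
          have htd2 : 2 * t + 2 ≤ S.d := by
            have q : S.l * (2 * t) < S.l * S.d := by linarith
            have := lt_of_mul_lt_mul_left q (by omega : (0:ℤ) ≤ S.l)
            obtain ⟨c, hc⟩ := hde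
            omega
          refine ⟨S.l + 1 - u, by rw [hcard, Finset.mem_Icc]; omega, ?_⟩
          rw [hmem]
          refine ⟨⟨2 * t + 2, by omega, by omega, ?_⟩, hx1, hxn⟩
          have hej : Even (2 * t + 2) := ⟨t + 1, by ring⟩
          rw [if_pos hej, if_pos hio]
          have he : (2 * t + 2) / 2 = t + 1 := by omega
          rw [he]
          linarith
end
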